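/- arXiv:2510.20619 — 2 statements merged into one kernel-verified Lean document; each statement's English description precedes it below -/
import Mathlib

section
/- Let X be a complex Hilbert space and A₀ a densely defined, closed, skew-symmetric unbounded operator on X, i.e., ⟨A₀x, y⟩ = −⟨x, A₀y⟩ for all x, y in the domain of A₀, and let A₀* denote its Hilbert-space adjoint. Let U be a complex Hilbert space and B₁, B₂ : dom(A₀*) → U linear maps such that (i) the map x ↦ (B₁x, B₂x) from dom(A₀*) to U × U is surjective, and (ii) the abstract Green identity ⟨A₀*x, y⟩ + ⟨x, A₀*y⟩ = ⟨B₁x, B₂y⟩ + ⟨B₂x, B₁y⟩ holds for all x, y ∈ dom(A₀*). Then for every maximally dissipative linear relation Θ ⊆ U × U, the operator A_Θ obtained by restricting A₀* to the domain {x ∈ dom(A₀*) : (B₁x, B₂x) ∈ Θ} is maximally dissipative: Re⟨A_Θ x, x⟩ ≤ 0 for all x in its domain, and the graph of A_Θ admits no proper extension to a dissipative linear relation on X. -/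
open scoped InnerProductSpace

/-- A linear relation `T` on a complex Hilbert space `H` is dissipative if
`Re ⟨x, y⟩ ≤ 0` for every `(x, y) ∈ T`. -/
def IsDissipativeRel {H : Type*} [NormedAddCommGroup H] [InnerProductSpace ℂ H]
    (T : Submodule ℂ (H × H)) : Prop :=
  ∀ p ∈ T, (inner ℂ p.1 p.2 : ℂ).re ≤ 0

/-- A linear relation is maximally dissipative if it is dissipative and every dissipative
linear relation containing it equals it. -/
def IsMaxDissipativeRel {H : Type*} [NormedAddCommGroup H] [InnerProductSpace ℂ H]
    (T : Submodule ℂ (H × H)) : Prop :=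
  IsDissipativeRel T ∧
    ∀ T' : Submodule ℂ (H × H), IsDissipativeRel T' → T ≤ T' → T' = T

/-!
Green's identity turns `Re ⟪x, A₀† x⟫` into `Re ⟪B₁ x, B₂ x⟫`, so `A_Θ` inherits dissipativity
from `Θ`. For maximality, the pairs `(v, -A₀ v)` with `v ∈ dom A₀` have zero boundary values and
are neutral, which forces every element of a dissipative extension `T` of `A_Θ` into the graph of
`A₀†`. By surjectivity, the boundary values of `T` then form a dissipative extension of `Θ`,
hence equal `Θ`, and so `T` is the graph of `A_Θ`.
-/

open ComplexConjugate LinearPMap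

theorem Complex.eq_zero_of_forall_re_mul_le {z : ℂ} {K : ℝ} (h : ∀ c : ℂ, (c * z).re ≤ K) :
    z = 0 := by
  by_contra hz
  have hpos : 0 < Complex.normSq z := Complex.normSq_pos.2 hz
  have := h (((K + 1) / Complex.normSq z : ℝ) * conj z)
  rw [mul_assoc, ← Complex.normSq_eq_conj_mul_self, ← Complex.ofReal_mul, Complex.ofReal_re,
    div_mul_cancel₀ _ hpos.ne'] at this
  linarith

/-- Otherwise moving from `p` along the neutral element `q` would make `Re ⟪·, ·⟫` positive. -/
theorem IsDissipativeRel.inner_add_inner_eq_zero {H : Type*} [NormedAddCommGroup H]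
    [InnerProductSpace ℂ H] {T : Submodule ℂ (H × H)} (hT : IsDissipativeRel T)
    {p q : H × H} (hp : p ∈ T) (hq : q ∈ T) (hq₀ : (⟪q.1, q.2⟫_ℂ).re = 0) :
    ⟪p.1, q.2⟫_ℂ + ⟪p.2, q.1⟫_ℂ = 0 := by
  refine Complex.eq_zero_of_forall_re_mul_le (K := -(⟪p.1, p.2⟫_ℂ).re) fun c => ?_
  have hc := hT _ (T.add_mem hp (T.smul_mem c hq))
  simp only [Prod.fst_add, Prod.snd_add, Prod.smul_fst, Prod.smul_snd, inner_add_left,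
    inner_add_right, inner_smul_left, inner_smul_right] at hc
  rw [← inner_conj_symm p.2 q.1]
  simp only [Complex.add_re, Complex.add_im, Complex.mul_re, Complex.mul_im, Complex.conj_re,
    Complex.conj_im, hq₀] at hc ⊢
  linarith

theorem LinearPMap.exists_adjoint_apply_eq {𝕜 E F : Type*} [RCLike 𝕜] [NormedAddCommGroup E]
    [InnerProductSpace 𝕜 E] [CompleteSpace E] [NormedAddCommGroup F] [InnerProductSpace 𝕜 F]
    {T : E →ₗ.[𝕜] F} (hT : Dense (T.domain : Set E)) {x : F} {y : E}
    (h : ∀ v : T.domain, ⟪T v, x⟫_𝕜 = ⟪(v : E), y⟫_𝕜) : ∃ hx : x ∈ T†.domain, T† ⟨x, hx⟩ = y := by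
  have hxy : (x, y) ∈ T†.graph := by
    rw [adjoint_graph_eq_graph_adjoint hT, Submodule.mem_adjoint_iff]
    intro a b hab
    obtain ⟨v, rfl, rfl⟩ := (mem_graph_iff T).1 hab
    exact sub_eq_zero.2 (h v)
  obtain ⟨z, rfl, hz⟩ := (mem_graph_iff _).1 hxy
  exact ⟨z.2, hz⟩

/-- The graph of `A_Θ`, the restriction of `A₀†` to `{x ∈ dom A₀† : (B₁ x, B₂ x) ∈ Θ}`. -/
noncomputable def boundaryRestrictionGraph {X U : Type*} [NormedAddCommGroup X]
    [InnerProductSpace ℂ X] [CompleteSpace X] [NormedAddCommGroup U] [InnerProductSpace ℂ U]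
    (A₀ : X →ₗ.[ℂ] X) (B₁ B₂ : A₀†.domain →ₗ[ℂ] U) (Θ : Submodule ℂ (U × U)) :
    Submodule ℂ (X × X) :=
  (Θ.comap (B₁.prod B₂)).map (A₀†.domain.subtype.prod A₀†.toFun)

section BoundaryTriple

variable {X U : Type*} [NormedAddCommGroup X] [InnerProductSpace ℂ X] [CompleteSpace X]
  [NormedAddCommGroup U] [InnerProductSpace ℂ U] {A₀ : X →ₗ.[ℂ] X} {B₁ B₂ : A₀†.domain →ₗ[ℂ] U}
  (hdense : Dense (A₀.domain : Set X))
  (hskew : ∀ x y : A₀.domain, ⟪A₀ x, (y : X)⟫_ℂ = -⟪(x : X), A₀ y⟫_ℂ)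
  (hsurj : Function.Surjective fun x : A₀†.domain => (B₁ x, B₂ x))
  (hgreen : ∀ x y : A₀†.domain,
    ⟪A₀† x, (y : X)⟫_ℂ + ⟪(x : X), A₀† y⟫_ℂ = ⟪B₁ x, B₂ y⟫_ℂ + ⟪B₂ x, B₁ y⟫_ℂ)

include hgreen in
theorem re_inner_adjoint_self_eq_re_inner_boundary (x : A₀†.domain) :
    (⟪(x : X), A₀† x⟫_ℂ).re = (⟪B₁ x, B₂ x⟫_ℂ).re := by
  have h := congrArg Complex.re (hgreen x x)
  rw [Complex.add_re, Complex.add_re, ← inner_conj_symm (A₀† x), ← inner_conj_symm (B₂ x),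
    Complex.conj_re, Complex.conj_re] at h
  linarith

include hgreen in
theorem isDissipativeRel_boundaryRestrictionGraph {Θ : Submodule ℂ (U × U)}
    (hΘ : IsDissipativeRel Θ) :
    IsDissipativeRel (boundaryRestrictionGraph A₀ B₁ B₂ Θ) := by
  rintro _ ⟨x, hx, rfl⟩
  exact (re_inner_adjoint_self_eq_re_inner_boundary hgreen x).trans_le (hΘ _ hx)

include hgreen in
theorem isDissipativeRel_map_boundary {T : Submodule ℂ (X × X)} (hT : IsDissipativeRel T) :
    IsDissipativeRel ((T.comap (A₀†.domain.subtype.prod A₀†.toFun)).map (B₁.prod B₂)) := by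
  rintro _ ⟨x, hx, rfl⟩
  exact (re_inner_adjoint_self_eq_re_inner_boundary hgreen x).symm.trans_le (hT _ hx)

include hsurj in
theorem boundary_eq_zero_of_forall_inner_add_inner_eq_zero {w : A₀†.domain}
    (hw : ∀ y : A₀†.domain, ⟪B₁ w, B₂ y⟫_ℂ + ⟪B₂ w, B₁ y⟫_ℂ = 0) : B₁ w = 0 ∧ B₂ w = 0 := by
  obtain ⟨y₁, hy₁⟩ := hsurj (0, B₁ w)
  obtain ⟨y₂, hy₂⟩ := hsurj (B₂ w, 0)
  simp only [Prod.mk.injEq] at hy₁ hy₂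
  have h₁ := hw y₁
  have h₂ := hw y₂
  rw [hy₁.1, hy₁.2, inner_zero_right, add_zero, inner_self_eq_zero] at h₁
  rw [hy₂.1, hy₂.2, inner_zero_right, zero_add, inner_self_eq_zero] at h₂
  exact ⟨h₁, h₂⟩

include hdense hskew hsurj hgreen in
theorem neg_mem_boundaryRestrictionGraph (Θ : Submodule ℂ (U × U)) (v : A₀.domain) :
    ((v : X), -A₀ v) ∈ boundaryRestrictionGraph A₀ B₁ B₂ Θ := by
  obtain ⟨hv, hA⟩ := exists_adjoint_apply_eq hdense (x := (v : X)) (y := -A₀ v) fun u => by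
    rw [inner_neg_right]
    exact hskew u v
  have hB := boundary_eq_zero_of_forall_inner_add_inner_eq_zero hsurj (w := ⟨v, hv⟩) fun y => by
    rw [← hgreen, hA, ← (adjoint_isFormalAdjoint hdense).symm v y, inner_neg_left,
      neg_add_cancel]
  refine ⟨⟨v, hv⟩, ?_, ?_⟩
  · show (B₁ _, B₂ _) ∈ Θ
    rw [hB.1, hB.2]
    exact Θ.zero_mem
  · exact Prod.ext rfl hA

include hdense hskew hsurj hgreen in
theorem exists_adjoint_apply_eq_of_mem_dissipative_extension
    {Θ : Submodule ℂ (U × U)} {T : Submodule ℂ (X × X)} (hT : IsDissipativeRel T)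
    (hle : boundaryRestrictionGraph A₀ B₁ B₂ Θ ≤ T) {x y : X} (hxy : (x, y) ∈ T) :
    ∃ hx : x ∈ A₀†.domain, A₀† ⟨x, hx⟩ = y := by
  refine exists_adjoint_apply_eq hdense fun v => ?_
  have hneutral : (⟪(v : X), -A₀ v⟫_ℂ).re = 0 := by
    have h := congrArg Complex.re (hskew v v)
    rw [← inner_conj_symm, Complex.conj_re, Complex.neg_re] at h
    rw [inner_neg_right, Complex.neg_re]
    linarith
  have h := hT.inner_add_inner_eq_zero hxy (hle (neg_mem_boundaryRestrictionGraph hdense hskew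
    hsurj hgreen Θ v)) hneutral
  rw [inner_neg_right, neg_add_eq_zero] at h
  rw [← inner_conj_symm (A₀ v : X) x, h, inner_conj_symm]

end BoundaryTriple

theorem boundary_triple_restriction_maxDissipative_general
    {X : Type*} [NormedAddCommGroup X] [InnerProductSpace ℂ X] [CompleteSpace X]
    {U : Type*} [NormedAddCommGroup U] [InnerProductSpace ℂ U]
    (A₀ : X →ₗ.[ℂ] X)
    (hdense : Dense (A₀.domain : Set X))
    (hskew : ∀ x y : A₀.domain,
      (inner ℂ (A₀ x) (y : X) : ℂ) = -(inner ℂ (x : X) (A₀ y) : ℂ))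
    (B₁ B₂ : A₀.adjoint.domain →ₗ[ℂ] U)
    (hsurj : Function.Surjective fun x : A₀.adjoint.domain => (B₁ x, B₂ x))
    (hgreen : ∀ x y : A₀.adjoint.domain,
      (inner ℂ (A₀.adjoint x) (y : X) : ℂ) + (inner ℂ (x : X) (A₀.adjoint y) : ℂ) =
        (inner ℂ (B₁ x) (B₂ y) : ℂ) + (inner ℂ (B₂ x) (B₁ y) : ℂ))
    (Θ : Submodule ℂ (U × U)) (hΘ : IsMaxDissipativeRel Θ) :
    IsMaxDissipativeRel
      (Submodule.map ((A₀.adjoint.domain.subtype).prod A₀.adjoint.toFun)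
        (Submodule.comap (B₁.prod B₂) Θ)) := by
  refine ⟨isDissipativeRel_boundaryRestrictionGraph hgreen hΘ.1, fun T hT hle => ?_⟩
  refine le_antisymm ?_ hle
  rintro ⟨x, y⟩ hxy
  obtain ⟨hx, rfl⟩ :=
    exists_adjoint_apply_eq_of_mem_dissipative_extension hdense hskew hsurj hgreen hT hle hxy
  have hboundary : (T.comap (A₀†.domain.subtype.prod A₀†.toFun)).map (B₁.prod B₂) = Θ := by
    refine hΘ.2 _ (isDissipativeRel_map_boundary hgreen hT) fun θ hθ => ?_
    obtain ⟨s, rfl⟩ := hsurj θ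
    exact ⟨s, hle ⟨s, hθ, rfl⟩, rfl⟩
  exact ⟨⟨x, hx⟩, hboundary ▸ ⟨⟨x, hx⟩, hxy, rfl⟩, rfl⟩

/-- Let `A₀` be a densely defined, closed, skew-symmetric operator on a complex Hilbert
space `X`, and let `(U, B₁, B₂)` be a boundary triple for `A₀*`: the combined boundary map
is surjective and the abstract Green identity holds.  Then for every maximally dissipative
linear relation `Θ` on `U`, the restriction `A_Θ` of `A₀*` to
`{x ∈ dom A₀* : (B₁ x, B₂ x) ∈ Θ}` is maximally dissipative, i.e. its graph
`{(x, A₀* x) : x ∈ dom A_Θ}` is a dissipative linear relation on `X` having no proper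
dissipative extension. -/
theorem boundary_triple_restriction_maxDissipative
    {X : Type*} [NormedAddCommGroup X] [InnerProductSpace ℂ X] [CompleteSpace X]
    {U : Type*} [NormedAddCommGroup U] [InnerProductSpace ℂ U] [CompleteSpace U]
    (A₀ : X →ₗ.[ℂ] X)
    (hdense : Dense (A₀.domain : Set X))
    (hclosed : A₀.IsClosed)
    (hskew : ∀ x y : A₀.domain,
      (inner ℂ (A₀ x) (y : X) : ℂ) = -(inner ℂ (x : X) (A₀ y) : ℂ))
    (B₁ B₂ : A₀.adjoint.domain →ₗ[ℂ] U)
    (hsurj : Function.Surjective fun x : A₀.adjoint.domain => (B₁ x, B₂ x))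
    (hgreen : ∀ x y : A₀.adjoint.domain,
      (inner ℂ (A₀.adjoint x) (y : X) : ℂ) + (inner ℂ (x : X) (A₀.adjoint y) : ℂ) =
        (inner ℂ (B₁ x) (B₂ y) : ℂ) + (inner ℂ (B₂ x) (B₁ y) : ℂ))
    (Θ : Submodule ℂ (U × U)) (hΘ : IsMaxDissipativeRel Θ) :
    IsMaxDissipativeRel
      (Submodule.map ((A₀.adjoint.domain.subtype).prod A₀.adjoint.toFun)
        (Submodule.comap (B₁.prod B₂) Θ)) :=
  boundary_triple_restriction_maxDissipative_general A₀ hdense hskew B₁ B₂ hsurj hgreen Θ hΘ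
end

section
/- Let X be a complex Hilbert space and A₀ a densely defined, closed, skew-symmetric unbounded operator on X, i.e., ⟨A₀x, y⟩ = −⟨x, A₀y⟩ for all x, y in the domain of A₀, and let A₀* denote its Hilbert-space adjoint. Let k be a natural number, and let B₁, B₂ : dom(A₀*) → ℂ^{2k} be linear maps such that (i) the map x ↦ (B₁x, B₂x) from dom(A₀*) to ℂ^{2k} × ℂ^{2k} is surjective, and (ii) the abstract Green identity ⟨A₀*x, y⟩ + ⟨x, A₀*y⟩ = ⟨B₁x, B₂y⟩ + ⟨B₂x, B₁y⟩ holds for all x, y ∈ dom(A₀*). Let W₁, W₂ ∈ ℂ^{2k×2k} be such that the 2k×4k matrix W_B = [W₁ W₂] has full row rank 2k and W₁W₂* + W₂W₁* is positive semidefinite. Then the operator 𝔄 obtained by restricting A₀* to the domain {x ∈ dom(A₀*) : W₁(B₁x) + W₂(B₂x) = 0} is maximally dissipative: Re⟨𝔄x, x⟩ ≤ 0 for all x in its domain, and the graph of 𝔄 admits no proper extension to a dissipative linear relation on X. -/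
/-!
Green's identity gives `Re ⟪x, A₀* x⟫ = Re ⟪B₁ x, B₂ x⟫`, so everything is decided on the
boundary space by the subspace `Θ = ker [W₁ W₂]` and the form `Re ⟪u, v⟫`.

`Θ` is nonpositive: the positivity hypothesis and the rank condition make `(W₁ + W₂)ᴴ`
invertible, and writing `u + v = (W₁ + W₂)ᴴ y` one finds for `(u, v) ∈ Θ`
`Re ⟪u, v⟫ = -Re ⟪W₁ᴴ y, W₂ᴴ y⟫ - ‖u - W₂ᴴ y‖² ≤ 0`. Hence the restriction is dissipative.

For maximality, let `T'` be a dissipative extension. The boundary maps vanish on `dom A₀`, so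
`T'` contains the graph of `-A₀`, whose elements are neutral for the form `Re ⟪x, y⟫`;
polarising against them forces `T' ⊆ graph A₀*`. The boundary values of `T'` then form a
nonpositive subspace containing `Θ`. A nonpositive subspace meets the diagonal `{(u, u)}`
trivially, so it has dimension at most `2k = dim Θ`; thus it is `Θ`, and `T' = T`.
-/

open Matrix
open scoped InnerProductSpace ComplexOrder

namespace Matrix

theorem mulVec_surjective_of_rank_eq_card {K m n : Type*} [Field K] [Fintype m] [Fintype n]
    {A : Matrix m n K} (hA : A.rank = Fintype.card m) : Function.Surjective A.mulVec := by
  have : LinearMap.range A.mulVecLin = ⊤ :=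
    Submodule.eq_top_of_finrank_eq (by rw [← rank, hA, Module.finrank_fintype_fun_eq_card])
  exact LinearMap.range_eq_top.mp this

variable {ι : Type*} [Fintype ι]

theorem re_star_dotProduct_comm (u v : ι → ℂ) : (star v ⬝ᵥ u).re = (star u ⬝ᵥ v).re := by
  rw [star_dotProduct, ← Complex.conj_re]
  rfl

theorem star_dotProduct_mul_conjTranspose_mulVec (A B : Matrix ι ι ℂ) (x : ι → ℂ) :
    star x ⬝ᵥ ((A * Bᴴ) *ᵥ x) = star (Aᴴ *ᵥ x) ⬝ᵥ (Bᴴ *ᵥ x) := by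
  rw [star_mulVec, conjTranspose_conjTranspose, ← dotProduct_mulVec, mulVec_mulVec]

theorem re_star_dotProduct_eq_of_add_eq {a c u v : ι → ℂ} (hsum : a + c = u + v)
    (h : star a ⬝ᵥ u + star c ⬝ᵥ v = 0) :
    (star u ⬝ᵥ v).re = -(star a ⬝ᵥ c).re - (star (u - c) ⬝ᵥ (u - c)).re := by
  have h' : star u ⬝ᵥ a + star v ⬝ᵥ c = 0 := by
    simpa [star_dotProduct (v := a), star_dotProduct (v := c)] using congrArg star h
  have hid : star u ⬝ᵥ v + star v ⬝ᵥ u =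
      -(star a ⬝ᵥ c + star c ⬝ᵥ a) - 2 * (star (u - c) ⬝ᵥ (u - c)) := by
    obtain rfl : v = a + c - u := by rw [hsum]; abel
    simp only [star_add, star_sub, add_dotProduct, sub_dotProduct, dotProduct_add,
      dotProduct_sub] at h h' ⊢
    linear_combination h + h'
  have := congrArg Complex.re hid
  simp only [Complex.add_re, Complex.sub_re, Complex.neg_re, Complex.mul_re, Complex.re_ofNat,
    Complex.im_ofNat, zero_mul, sub_zero, re_star_dotProduct_comm u v,
    re_star_dotProduct_comm a c] at this
  linarith

def IsDissipativeBoundaryRel (L : Submodule ℂ ((ι → ℂ) × (ι → ℂ))) : Prop :=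
  ∀ ξ ∈ L, (star ξ.1 ⬝ᵥ ξ.2).re ≤ 0

theorem IsDissipativeBoundaryRel.finrank_le_card {L : Submodule ℂ ((ι → ℂ) × (ι → ℂ))}
    (hL : IsDissipativeBoundaryRel L) : Module.finrank ℂ L ≤ Fintype.card ι := by
  have hinj : Function.Injective ((LinearMap.fst ℂ _ _ - LinearMap.snd ℂ _ _) ∘ₗ L.subtype) := by
    rw [← LinearMap.ker_eq_bot, LinearMap.ker_eq_bot']
    rintro ⟨⟨u, v⟩, hξ⟩ huv
    obtain rfl : u = v := sub_eq_zero.mp huv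
    obtain ⟨hre, him⟩ := Complex.nonneg_iff.mp (dotProduct_star_self_nonneg u)
    have hu : star u ⬝ᵥ u = 0 := Complex.ext (by simpa using le_antisymm (hL _ hξ) hre) him.symm
    simp [dotProduct_star_self_eq_zero.mp hu]
  simpa using LinearMap.finrank_le_finrank_of_injective hinj

def kerFromCols (W₁ W₂ : Matrix ι ι ℂ) : Submodule ℂ ((ι → ℂ) × (ι → ℂ)) :=
  LinearMap.ker (W₁.mulVecLin ∘ₗ LinearMap.fst ℂ _ _ + W₂.mulVecLin ∘ₗ LinearMap.snd ℂ _ _)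

variable {W₁ W₂ : Matrix ι ι ℂ}

theorem finrank_kerFromCols (hrank : (fromCols W₁ W₂).rank = Fintype.card ι) :
    Module.finrank ℂ (kerFromCols W₁ W₂) = Fintype.card ι := by
  set M := W₁.mulVecLin ∘ₗ LinearMap.fst ℂ _ _ + W₂.mulVecLin ∘ₗ LinearMap.snd ℂ _ _
  have hM : LinearMap.range M = ⊤ := by
    refine LinearMap.range_eq_top.mpr fun t => ?_
    obtain ⟨w, hw⟩ := mulVec_surjective_of_rank_eq_card hrank t
    exact ⟨(w ∘ Sum.inl, w ∘ Sum.inr), by simpa [M] using hw⟩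
  have := M.finrank_range_add_finrank_ker
  rw [hM, finrank_top, Module.finrank_prod, Module.finrank_fintype_fun_eq_card] at this
  exact Nat.add_left_cancel this

theorem eq_kerFromCols_of_le (hrank : (fromCols W₁ W₂).rank = Fintype.card ι)
    {L : Submodule ℂ ((ι → ℂ) × (ι → ℂ))} (hL : IsDissipativeBoundaryRel L)
    (hle : kerFromCols W₁ W₂ ≤ L) : L = kerFromCols W₁ W₂ :=
  (Submodule.eq_of_le_of_finrank_le hle <| by
    rw [finrank_kerFromCols hrank]; exact hL.finrank_le_card).symm

theorem eq_zero_of_conjTranspose_mulVec_eq_zero (hrank : (fromCols W₁ W₂).rank = Fintype.card ι)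
    {x : ι → ℂ} (h₁ : W₁ᴴ *ᵥ x = 0) (h₂ : W₂ᴴ *ᵥ x = 0) : x = 0 := by
  obtain ⟨y, hy⟩ := mulVec_surjective_of_rank_eq_card hrank x
  have : star x ⬝ᵥ x = (star x ᵥ* fromCols W₁ W₂) ⬝ᵥ y := by rw [← dotProduct_mulVec, hy]
  rw [vecMul_fromCols, ← conjTranspose_conjTranspose W₁, ← conjTranspose_conjTranspose W₂,
    ← star_mulVec, ← star_mulVec, h₁, h₂] at this
  simpa using this

theorem conjTranspose_add_mulVec_surjective (hrank : (fromCols W₁ W₂).rank = Fintype.card ι)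
    (hpos : (W₁ * W₂ᴴ + W₂ * W₁ᴴ).PosSemidef) : Function.Surjective (W₁ + W₂)ᴴ.mulVec := by
  classical
  refine mulVec_surjective_iff_isUnit.mpr (mulVec_injective_iff_isUnit.mp ?_)
  rw [← coe_mulVecLin, injective_iff_map_eq_zero]
  intro x hx
  rw [mulVecLin_apply, conjTranspose_add, add_mulVec, add_eq_zero_iff_eq_neg] at hx
  have hS := hpos.dotProduct_mulVec_nonneg x
  rw [add_mulVec, dotProduct_add, star_dotProduct_mul_conjTranspose_mulVec,
    star_dotProduct_mul_conjTranspose_mulVec, hx, star_neg, neg_dotProduct, dotProduct_neg,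
    ← neg_add, neg_nonneg] at hS
  have h₀ := dotProduct_star_self_nonneg (W₂ᴴ *ᵥ x)
  have h₂ : W₂ᴴ *ᵥ x = 0 :=
    dotProduct_star_self_eq_zero.mp (le_antisymm ((le_add_of_nonneg_left h₀).trans hS) h₀)
  exact eq_zero_of_conjTranspose_mulVec_eq_zero hrank (by rw [hx, h₂, neg_zero]) h₂

theorem isDissipativeBoundaryRel_kerFromCols (hrank : (fromCols W₁ W₂).rank = Fintype.card ι)
    (hpos : (W₁ * W₂ᴴ + W₂ * W₁ᴴ).PosSemidef) : IsDissipativeBoundaryRel (kerFromCols W₁ W₂) := by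
  rintro ⟨u, v⟩ (huv : W₁ *ᵥ u + W₂ *ᵥ v = 0)
  obtain ⟨x, hx⟩ := conjTranspose_add_mulVec_surjective hrank hpos (u + v)
  rw [conjTranspose_add, add_mulVec] at hx
  have h : star (W₁ᴴ *ᵥ x) ⬝ᵥ u + star (W₂ᴴ *ᵥ x) ⬝ᵥ v = 0 := by
    rw [star_mulVec, star_mulVec, conjTranspose_conjTranspose, conjTranspose_conjTranspose,
      ← dotProduct_mulVec, ← dotProduct_mulVec, ← dotProduct_add, huv, dotProduct_zero]
  have hS := (Complex.nonneg_iff.mp (hpos.dotProduct_mulVec_nonneg x)).1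
  rw [add_mulVec, dotProduct_add, star_dotProduct_mul_conjTranspose_mulVec,
    star_dotProduct_mul_conjTranspose_mulVec, Complex.add_re,
    re_star_dotProduct_comm (W₁ᴴ *ᵥ x)] at hS
  have hw := (Complex.nonneg_iff.mp (dotProduct_star_self_nonneg (u - W₂ᴴ *ᵥ x))).1
  rw [re_star_dotProduct_eq_of_add_eq hx h]
  linarith

end Matrix

namespace IsDissipativeRel

variable {H : Type*} [NormedAddCommGroup H] [InnerProductSpace ℂ H] {T : Submodule ℂ (H × H)}

theorem re_inner_add_inner_eq_zero (hT : IsDissipativeRel T) {p q : H × H} (hp : p ∈ T)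
    (hp₀ : (⟪p.1, p.2⟫_ℂ).re = 0) (hq : q ∈ T) : (⟪p.1, q.2⟫_ℂ + ⟪q.1, p.2⟫_ℂ).re = 0 := by
  set d := (⟪p.1, q.2⟫_ℂ + ⟪q.1, p.2⟫_ℂ).re
  have hline : ∀ t : ℝ, (⟪q.1, q.2⟫_ℂ).re + t * d ≤ 0 := by
    intro t
    have := hT _ (T.add_mem hq (T.smul_mem (t : ℂ) hp))
    simp only [Prod.fst_add, Prod.snd_add, Prod.smul_fst, Prod.smul_snd, inner_add_left,
      inner_add_right, inner_smul_left, inner_smul_right, Complex.conj_ofReal] at this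
    simpa [d, hp₀, mul_add, add_assoc] using this
  by_contra hd
  have := hline ((1 - (⟪q.1, q.2⟫_ℂ).re) / d)
  rw [div_mul_cancel₀ _ hd] at this
  linarith

theorem inner_snd_fst_eq_neg (hT : IsDissipativeRel T) {p q : H × H} (hp : p ∈ T)
    (hp₀ : (⟪p.1, p.2⟫_ℂ).re = 0) (hq : q ∈ T) : ⟪q.2, p.1⟫_ℂ = -⟪q.1, p.2⟫_ℂ := by
  have h₁ := hT.re_inner_add_inner_eq_zero hp hp₀ hq
  have hIp₀ : (⟪(Complex.I • p).1, (Complex.I • p).2⟫_ℂ).re = 0 := by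
    simpa [inner_smul_left, inner_smul_right, ← mul_assoc] using hp₀
  have h₂ := hT.re_inner_add_inner_eq_zero (T.smul_mem Complex.I hp) hIp₀ hq
  simp only [Prod.smul_fst, Prod.smul_snd, inner_smul_left, inner_smul_right, Complex.conj_I,
    Complex.add_re, neg_mul, Complex.neg_re, Complex.I_mul_re] at h₁ h₂
  rw [← inner_conj_symm]
  apply Complex.ext <;>
    simp only [Complex.conj_re, Complex.conj_im, Complex.neg_re, Complex.neg_im] <;> linarith

end IsDissipativeRel

section BoundaryTriple

variable {X : Type*} [NormedAddCommGroup X] [InnerProductSpace ℂ X] [CompleteSpace X]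
  {A : X →ₗ.[ℂ] X}

theorem LinearPMap.exists_adjoint_apply_eq_neg (hdense : Dense (A.domain : Set X))
    (hskew : ∀ x y : A.domain, ⟪A x, (y : X)⟫_ℂ = -⟪(x : X), A y⟫_ℂ) (a : A.domain) :
    ∃ h : (a : X) ∈ A.adjoint.domain, A.adjoint ⟨a, h⟩ = -A a := by
  have key : ∀ x : A.domain, ⟪-A a, (x : X)⟫_ℂ = ⟪(a : X), A x⟫_ℂ := fun x => by
    rw [inner_neg_left, hskew, neg_neg]
  exact ⟨A.mem_adjoint_domain_of_exists _ ⟨_, key⟩, A.adjoint_apply_eq hdense _ key⟩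

theorem IsDissipativeRel.le_adjoint_graph {T : Submodule ℂ (X × X)} (hT : IsDissipativeRel T)
    (hdense : Dense (A.domain : Set X))
    (hskew : ∀ x y : A.domain, ⟪A x, (y : X)⟫_ℂ = -⟪(x : X), A y⟫_ℂ)
    (hAT : ∀ a : A.domain, ((a : X), -A a) ∈ T) : T ≤ A.adjoint.graph := by
  intro q hq
  have key : ∀ a : A.domain, ⟪q.2, (a : X)⟫_ℂ = ⟪q.1, A a⟫_ℂ := fun a => by
    have hneutral : (⟪(a : X), -A a⟫_ℂ).re = 0 := by
      have := congrArg Complex.re (hskew a a)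
      rw [← inner_conj_symm, Complex.conj_re, Complex.neg_re] at this
      rw [inner_neg_right, Complex.neg_re]
      linarith
    simpa using hT.inner_snd_fst_eq_neg (hAT a) hneutral hq
  rw [LinearPMap.mem_graph_iff]
  exact ⟨⟨q.1, A.mem_adjoint_domain_of_exists q.1 ⟨q.2, key⟩⟩, rfl, A.adjoint_apply_eq hdense _ key⟩

variable {ι : Type*} [Fintype ι] {B₁ B₂ : A.adjoint.domain →ₗ[ℂ] (ι → ℂ)}

theorem re_inner_adjoint_self_eq
    (hgreen : ∀ x y : A.adjoint.domain, ⟪A.adjoint x, (y : X)⟫_ℂ + ⟪(x : X), A.adjoint y⟫_ℂ =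
      star (B₁ x) ⬝ᵥ B₂ y + star (B₂ x) ⬝ᵥ B₁ y) (x : A.adjoint.domain) :
    (⟪(x : X), A.adjoint x⟫_ℂ).re = (star (B₁ x) ⬝ᵥ B₂ x).re := by
  have := congrArg Complex.re (hgreen x x)
  rw [Complex.add_re, Complex.add_re, ← inner_conj_symm, Complex.conj_re,
    Matrix.re_star_dotProduct_comm (B₁ x)] at this
  linarith

theorem boundary_eq_zero_of_mem_domain (hdense : Dense (A.domain : Set X))
    (hskew : ∀ x y : A.domain, ⟪A x, (y : X)⟫_ℂ = -⟪(x : X), A y⟫_ℂ)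
    (hsurj : Function.Surjective fun x : A.adjoint.domain => (B₁ x, B₂ x))
    (hgreen : ∀ x y : A.adjoint.domain, ⟪A.adjoint x, (y : X)⟫_ℂ + ⟪(x : X), A.adjoint y⟫_ℂ =
      star (B₁ x) ⬝ᵥ B₂ y + star (B₂ x) ⬝ᵥ B₁ y)
    (a : A.domain) (ha : (a : X) ∈ A.adjoint.domain) :
    B₁ ⟨a, ha⟩ = 0 ∧ B₂ ⟨a, ha⟩ = 0 := by
  obtain ⟨_, hAa⟩ := LinearPMap.exists_adjoint_apply_eq_neg hdense hskew a
  obtain ⟨y, hy⟩ := hsurj (B₂ ⟨a, ha⟩, B₁ ⟨a, ha⟩)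
  simp only [Prod.mk.injEq] at hy
  have hformal : ⟪(a : X), A.adjoint y⟫_ℂ = ⟪A a, (y : X)⟫_ℂ := by
    rw [← inner_conj_symm, LinearPMap.adjoint_isFormalAdjoint hdense y a, inner_conj_symm]
  have := hgreen ⟨a, ha⟩ y
  rw [hAa, hy.1, hy.2, inner_neg_left, hformal, neg_add_cancel] at this
  obtain ⟨h₁, h₂⟩ := (add_eq_zero_iff_of_nonneg (dotProduct_star_self_nonneg _)
    (dotProduct_star_self_nonneg _)).mp this.symm
  exact ⟨dotProduct_star_self_eq_zero.mp h₁, dotProduct_star_self_eq_zero.mp h₂⟩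

end BoundaryTriple

theorem boundary_triple_matrix_restriction_maxDissipative_general
    {X : Type*} [NormedAddCommGroup X] [InnerProductSpace ℂ X] [CompleteSpace X] (k : ℕ)
    (A₀ : X →ₗ.[ℂ] X)
    (hdense : Dense (A₀.domain : Set X))
    (hskew : ∀ x y : A₀.domain,
      (inner ℂ (A₀ x) (y : X) : ℂ) = -(inner ℂ (x : X) (A₀ y) : ℂ))
    (B₁ B₂ : A₀.adjoint.domain →ₗ[ℂ] (Fin (2 * k) → ℂ))
    (hsurj : Function.Surjective fun x : A₀.adjoint.domain => (B₁ x, B₂ x))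
    (hgreen : ∀ x y : A₀.adjoint.domain,
      (inner ℂ (A₀.adjoint x) (y : X) : ℂ) + (inner ℂ (x : X) (A₀.adjoint y) : ℂ) =
        star (B₁ x) ⬝ᵥ B₂ y + star (B₂ x) ⬝ᵥ B₁ y)
    (W₁ W₂ : Matrix (Fin (2 * k)) (Fin (2 * k)) ℂ)
    (hrank : (Matrix.fromCols W₁ W₂).rank = 2 * k)
    (hpos : (W₁ * W₂ᴴ + W₂ * W₁ᴴ).PosSemidef) :
    IsMaxDissipativeRel
      (Submodule.map ((A₀.adjoint.domain.subtype).prod A₀.adjoint.toFun)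
        (LinearMap.ker (W₁.mulVecLin.comp B₁ + W₂.mulVecLin.comp B₂))) := by
  replace hrank : (fromCols W₁ W₂).rank = Fintype.card (Fin (2 * k)) := by
    rw [hrank, Fintype.card_fin]
  set Ψ := (A₀.adjoint.domain.subtype).prod A₀.adjoint.toFun
  refine ⟨?_, fun T' hT' hle => le_antisymm ?_ hle⟩
  · rintro _ ⟨x, hx, rfl⟩
    exact (re_inner_adjoint_self_eq hgreen x).trans_le
      (isDissipativeBoundaryRel_kerFromCols hrank hpos (B₁ x, B₂ x) hx)
  have hgraph : T' ≤ A₀.adjoint.graph := by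
    refine hT'.le_adjoint_graph hdense hskew fun a => hle ?_
    obtain ⟨ha, hAa⟩ := LinearPMap.exists_adjoint_apply_eq_neg hdense hskew a
    obtain ⟨h₁, h₂⟩ := boundary_eq_zero_of_mem_domain hdense hskew hsurj hgreen a ha
    refine ⟨⟨a, ha⟩, ?_, Prod.ext rfl hAa⟩
    simp [h₁, h₂]
  set L := (T'.comap Ψ).map (B₁.prod B₂)
  have hL : L = kerFromCols W₁ W₂ := by
    refine eq_kerFromCols_of_le hrank ?_ fun ξ hξ => ?_
    · rintro _ ⟨x, hx, rfl⟩
      exact (re_inner_adjoint_self_eq hgreen x).symm.trans_le (hT' _ hx)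
    · obtain ⟨x, rfl⟩ := hsurj ξ
      exact ⟨x, hle ⟨x, hξ, rfl⟩, rfl⟩
  intro p hp
  obtain ⟨x, hx₁, hx₂⟩ := (A₀.adjoint.mem_graph_iff).mp (hgraph hp)
  have hxp : Ψ x = p := Prod.ext hx₁ hx₂
  have hx : (B₁ x, B₂ x) ∈ L := ⟨x, show Ψ x ∈ T' by rwa [hxp], rfl⟩
  rw [hL] at hx
  exact ⟨x, hx, hxp⟩

/-- Let `A₀` be a densely defined, closed, skew-symmetric operator on a complex Hilbert
space `X`, and let `(ℂ^{2k}, B₁, B₂)` be a boundary triple for `A₀*`: the combined boundary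
map is surjective and the abstract Green identity holds, where on `ℂ^{2k}` the standard
Hermitian inner product `⟨v, w⟩ = star v ⬝ᵥ w` is used.  If `W_B = [W₁ W₂]` has full row
rank `2k` and `W₁W₂* + W₂W₁*` is positive semidefinite, then the restriction `𝔄` of `A₀*`
to `{x ∈ dom A₀* : W₁ (B₁ x) + W₂ (B₂ x) = 0}` is maximally dissipative, i.e. its graph
`{(x, A₀* x) : x ∈ dom 𝔄}` is a dissipative linear relation on `X` having no proper
dissipative extension. -/
theorem boundary_triple_matrix_restriction_maxDissipative
    {X : Type*} [NormedAddCommGroup X] [InnerProductSpace ℂ X] [CompleteSpace X] (k : ℕ)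
    (A₀ : X →ₗ.[ℂ] X)
    (hdense : Dense (A₀.domain : Set X))
    (hclosed : A₀.IsClosed)
    (hskew : ∀ x y : A₀.domain,
      (inner ℂ (A₀ x) (y : X) : ℂ) = -(inner ℂ (x : X) (A₀ y) : ℂ))
    (B₁ B₂ : A₀.adjoint.domain →ₗ[ℂ] (Fin (2 * k) → ℂ))
    (hsurj : Function.Surjective fun x : A₀.adjoint.domain => (B₁ x, B₂ x))
    (hgreen : ∀ x y : A₀.adjoint.domain,
      (inner ℂ (A₀.adjoint x) (y : X) : ℂ) + (inner ℂ (x : X) (A₀.adjoint y) : ℂ) =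
        star (B₁ x) ⬝ᵥ B₂ y + star (B₂ x) ⬝ᵥ B₁ y)
    (W₁ W₂ : Matrix (Fin (2 * k)) (Fin (2 * k)) ℂ)
    (hrank : (Matrix.fromCols W₁ W₂).rank = 2 * k)
    (hpos : (W₁ * W₂ᴴ + W₂ * W₁ᴴ).PosSemidef) :
    IsMaxDissipativeRel
      (Submodule.map ((A₀.adjoint.domain.subtype).prod A₀.adjoint.toFun)
        (LinearMap.ker (W₁.mulVecLin.comp B₁ + W₂.mulVecLin.comp B₂))) :=
  boundary_triple_matrix_restriction_maxDissipative_general k A₀ hdense hskew B₁ B₂ hsurj hgreen W₁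
    W₂ hrank hpos
end
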